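/- arXiv:1707.03775 — 6 statements merged into one kernel-verified Lean document; each statement's English description precedes it below -/
import Mathlib

section
/- Let e = (1,0,0)ᵀ and [e]_× the 3×3 skew-symmetric matrix of e (so [e]_× x = e × x for all x ∈ ℝ³). If A = (a_{ij}) and A' = (a'_{ij}) are nonsingular real 3×3 matrices satisfying A'ᵀ [e]_× A = [e]_×, then a_{21} = a_{31} = a'_{21} = a'_{31} = 0, and there exists λ ≠ 0 such that the lower-right 2×2 block of A equals λ times the lower-right 2×2 block of A', i.e. [[a_{22}, a_{23}],[a_{32}, a_{33}]] = λ·[[a'_{22}, a'_{23}],[a'_{32}, a'_{33}]]. -/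
open Matrix

/-- The cross-product matrix `[e]ₓ` of `e = (1,0,0)ᵀ`. -/
noncomputable def eCross : Matrix (Fin 3) (Fin 3) ℝ :=
  !![0, 0, 0; 0, 0, -1; 0, 1, 0]

/-- Necessity direction of Theorem 1: if nonsingular `A, A'` satisfy
`A'ᵀ [e]ₓ A = [e]ₓ`, then `a₂₁ = a₃₁ = a'₂₁ = a'₃₁ = 0` and the lower-right
2×2 block of `A` is a nonzero multiple `λ` of that of `A'`. -/
theorem theorem1_necessity (A A' : Matrix (Fin 3) (Fin 3) ℝ)
    (hA : A.det ≠ 0) (hA' : A'.det ≠ 0)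
    (h : A'ᵀ * eCross * A = eCross) :
    A 1 0 = 0 ∧ A 2 0 = 0 ∧ A' 1 0 = 0 ∧ A' 2 0 = 0 ∧
      ∃ l : ℝ, l ≠ 0 ∧
        (!![A 1 1, A 1 2; A 2 1, A 2 2] : Matrix (Fin 2) (Fin 2) ℝ) =
          l • !![A' 1 1, A' 1 2; A' 2 1, A' 2 2] := by
  have key : ∀ i j : Fin 3, A' 2 i * A 1 j - A' 1 i * A 2 j = eCross i j := by
    intro i j
    have := congrFun (congrFun h i) j
    simpa [eCross, Matrix.mul_apply, Matrix.transpose_apply, Fin.sum_univ_three, sub_eq_add_neg] using this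
  have k00 : A' 2 0 * A 1 0 - A' 1 0 * A 2 0 = 0 := by simpa [eCross] using key 0 0
  have k10 : A' 2 1 * A 1 0 - A' 1 1 * A 2 0 = 0 := by simpa [eCross] using key 1 0
  have k20 : A' 2 2 * A 1 0 - A' 1 2 * A 2 0 = 0 := by simpa [eCross] using key 2 0
  have k01 : A' 2 0 * A 1 1 - A' 1 0 * A 2 1 = 0 := by simpa [eCross] using key 0 1
  have k02 : A' 2 0 * A 1 2 - A' 1 0 * A 2 2 = 0 := by simpa [eCross] using key 0 2
  have k11 : A' 2 1 * A 1 1 - A' 1 1 * A 2 1 = 0 := by simpa [eCross] using key 1 1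
  have k12 : A' 2 1 * A 1 2 - A' 1 1 * A 2 2 = -1 := by simpa [eCross] using key 1 2
  have k21 : A' 2 2 * A 1 1 - A' 1 2 * A 2 1 = 1 := by simpa [eCross] using key 2 1
  have k22 : A' 2 2 * A 1 2 - A' 1 2 * A 2 2 = 0 := by simpa [eCross] using key 2 2
  -- a₂₁ = 0
  have hq : A 1 0 * A'.det = 0 := by
    rw [Matrix.det_fin_three]
    linear_combination (A' 0 1 * A' 1 2 - A' 0 2 * A' 1 1) * k00 +
      (A' 0 2 * A' 1 0 - A' 0 0 * A' 1 2) * k10 +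
      (A' 0 0 * A' 1 1 - A' 0 1 * A' 1 0) * k20
  have hp : A 2 0 * A'.det = 0 := by
    rw [Matrix.det_fin_three]
    linear_combination (A' 0 1 * A' 2 2 - A' 0 2 * A' 2 1) * k00 +
      (A' 0 2 * A' 2 0 - A' 0 0 * A' 2 2) * k10 +
      (A' 0 0 * A' 2 1 - A' 0 1 * A' 2 0) * k20
  have hq' : A' 1 0 * A.det = 0 := by
    rw [Matrix.det_fin_three]
    linear_combination -((A 0 1 * A 1 2 - A 0 2 * A 1 1) * k00 +
      (A 0 2 * A 1 0 - A 0 0 * A 1 2) * k01 +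
      (A 0 0 * A 1 1 - A 0 1 * A 1 0) * k02)
  have hp' : A' 2 0 * A.det = 0 := by
    rw [Matrix.det_fin_three]
    linear_combination -((A 0 1 * A 2 2 - A 0 2 * A 2 1) * k00 +
      (A 0 2 * A 2 0 - A 0 0 * A 2 2) * k01 +
      (A 0 0 * A 2 1 - A 0 1 * A 2 0) * k02)
  have h10 : A 1 0 = 0 := by
    rcases mul_eq_zero.mp hq with h0 | h0
    · exact h0
    · exact absurd h0 hA'
  have h20 : A 2 0 = 0 := by
    rcases mul_eq_zero.mp hp with h0 | h0
    · exact h0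
    · exact absurd h0 hA'
  have h10' : A' 1 0 = 0 := by
    rcases mul_eq_zero.mp hq' with h0 | h0
    · exact h0
    · exact absurd h0 hA
  have h20' : A' 2 0 = 0 := by
    rcases mul_eq_zero.mp hp' with h0 | h0
    · exact h0
    · exact absurd h0 hA
  refine ⟨h10, h20, h10', h20', ?_⟩
  set d : ℝ := A' 1 1 * A' 2 2 - A' 1 2 * A' 2 1 with hd
  have hAdet : A'.det = A' 0 0 * d := by
    rw [Matrix.det_fin_three, h10', h20', hd]; ring
  have hdne : d ≠ 0 := by
    intro h0
    exact hA' (by rw [hAdet, h0, mul_zero])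
  have e11 : d * A 1 1 = A' 1 1 := by
    rw [hd]; linear_combination A' 1 1 * k21 - A' 1 2 * k11
  have e12 : d * A 1 2 = A' 1 2 := by
    rw [hd]; linear_combination A' 1 1 * k22 - A' 1 2 * k12
  have e21 : d * A 2 1 = A' 2 1 := by
    rw [hd]; linear_combination A' 2 1 * k21 - A' 2 2 * k11
  have e22 : d * A 2 2 = A' 2 2 := by
    rw [hd]; linear_combination A' 2 1 * k22 - A' 2 2 * k12
  refine ⟨d⁻¹, inv_ne_zero hdne, ?_⟩
  ext i j
  fin_cases i <;> fin_cases j <;>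
    simp only [Matrix.smul_apply, Matrix.cons_val', Matrix.cons_val_zero, Matrix.cons_val_one,
      Matrix.head_cons, Matrix.head_fin_const, Matrix.empty_val', Matrix.cons_val_fin_one,
      Matrix.of_apply, smul_eq_mul, Fin.mk_zero, Fin.mk_one] <;>
    field_simp <;> linarith [e11, e12, e21, e22]
end

section
/- Let e = (1,0,0)ᵀ and [e]_× the 3×3 skew-symmetric matrix of e. Let A be a real 3×3 matrix with a_{21} = a_{31} = 0 and nonsingular lower-right 2×2 block B = [[a_{22}, a_{23}],[a_{32}, a_{33}]], and let λ ∈ ℝ satisfy λ·det(B) = 1. Then every matrix A' with a'_{21} = a'_{31} = 0 whose lower-right 2×2 block equals λ·B (with arbitrary first row a'_{11}, a'_{12}, a'_{13}) satisfies A'ᵀ [e]_× A = [e]_×. -/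
open Matrix

/-- Sufficiency direction of Theorem 1: if `A` has `a₂₁ = a₃₁ = 0` and a
nonsingular lower-right 2×2 block `B`, and `λ·det B = 1`, then every `A'`
with `a'₂₁ = a'₃₁ = 0`, lower-right block `λ·B` and arbitrary first row
satisfies `A'ᵀ [e]ₓ A = [e]ₓ`. -/
theorem theorem1_sufficiency (A : Matrix (Fin 3) (Fin 3) ℝ)
    (hA21 : A 1 0 = 0) (hA31 : A 2 0 = 0)
    (hB : (!![A 1 1, A 1 2; A 2 1, A 2 2] : Matrix (Fin 2) (Fin 2) ℝ).det ≠ 0)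
    (l : ℝ)
    (hl : l * (!![A 1 1, A 1 2; A 2 1, A 2 2] : Matrix (Fin 2) (Fin 2) ℝ).det = 1)
    (A' : Matrix (Fin 3) (Fin 3) ℝ)
    (hA'21 : A' 1 0 = 0) (hA'31 : A' 2 0 = 0)
    (hblock : (!![A' 1 1, A' 1 2; A' 2 1, A' 2 2] : Matrix (Fin 2) (Fin 2) ℝ) =
      l • !![A 1 1, A 1 2; A 2 1, A 2 2]) :
    A'ᵀ * eCross * A = eCross := by
  have h11 := congrFun (congrFun hblock 0) 0
  have h12 := congrFun (congrFun hblock 0) 1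
  have h21 := congrFun (congrFun hblock 1) 0
  have h22 := congrFun (congrFun hblock 1) 1
  simp [Matrix.smul_apply] at h11 h12 h21 h22
  rw [Matrix.det_fin_two_of] at hl
  ext i j
  fin_cases i <;> fin_cases j <;>
    simp [eCross, Matrix.mul_apply, Fin.sum_univ_three, hA21, hA31, hA'21, hA'31,
      h11, h12, h21, h22, Matrix.vecHead, Matrix.vecTail] <;> ring_nf <;> nlinarith [hl]
end

section
/- Let e = (1,0,0)ᵀ and [e]_× the 3×3 skew-symmetric matrix of e. For nonsingular real 3×3 matrices A and A', the equation A'ᵀ [e]_× A = [e]_× holds if and only if a_{21} = a_{31} = a'_{21} = a'_{31} = 0 and there exists λ ∈ ℝ such that the lower-right 2×2 block of A' equals λ times the lower-right 2×2 block B of A and λ·det(B) = 1. -/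
open Matrix

/-- Full (iff) form of Theorem 1: for nonsingular `A, A'`, the equation
`A'ᵀ [e]ₓ A = [e]ₓ` holds iff `a₂₁ = a₃₁ = a'₂₁ = a'₃₁ = 0` and the
lower-right 2×2 block of `A'` equals `λ` times that of `A`, with
`λ·det B = 1`. -/
theorem theorem1_iff (A A' : Matrix (Fin 3) (Fin 3) ℝ)
    (hA : A.det ≠ 0) (hA' : A'.det ≠ 0) :
    A'ᵀ * eCross * A = eCross ↔
      A 1 0 = 0 ∧ A 2 0 = 0 ∧ A' 1 0 = 0 ∧ A' 2 0 = 0 ∧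
        ∃ l : ℝ,
          (!![A' 1 1, A' 1 2; A' 2 1, A' 2 2] : Matrix (Fin 2) (Fin 2) ℝ) =
            l • !![A 1 1, A 1 2; A 2 1, A 2 2] ∧
          l * (!![A 1 1, A 1 2; A 2 1, A 2 2] : Matrix (Fin 2) (Fin 2) ℝ).det = 1 := by
  rw [Matrix.det_fin_three] at hA hA'
  constructor
  · intro h
    have e00 := congrFun (congrFun h 0) 0
    have e01 := congrFun (congrFun h 0) 1
    have e02 := congrFun (congrFun h 0) 2
    have e10 := congrFun (congrFun h 1) 0
    have e11 := congrFun (congrFun h 1) 1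
    have e12 := congrFun (congrFun h 1) 2
    have e20 := congrFun (congrFun h 2) 0
    have e21 := congrFun (congrFun h 2) 1
    have e22 := congrFun (congrFun h 2) 2
    simp [eCross, Matrix.mul_apply, Fin.sum_univ_three, Matrix.transpose_apply,
      Matrix.vecHead, Matrix.vecTail]
      at e00 e01 e02 e10 e11 e12 e20 e21 e22
    -- e_ij : A' 2 i * A 1 j - A' 1 i * A 2 j = E i j
    have ha10 : A 1 0 = 0 := by
      by_contra hc
      apply hA'
      apply mul_left_cancel₀ hc
      linear_combination (A' 0 0 * A' 1 1 - A' 0 1 * A' 1 0) * e20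
        + (A' 0 2 * A' 1 0 - A' 0 0 * A' 1 2) * e10
        + (A' 0 1 * A' 1 2 - A' 0 2 * A' 1 1) * e00
    have ha20 : A 2 0 = 0 := by
      by_contra hc
      apply hA'
      apply mul_left_cancel₀ hc
      linear_combination (A' 0 0 * A' 2 1 - A' 0 1 * A' 2 0) * e20
        + (A' 0 2 * A' 2 0 - A' 0 0 * A' 2 2) * e10
        + (A' 0 1 * A' 2 2 - A' 0 2 * A' 2 1) * e00
    have hb10 : A' 1 0 = 0 := by
      by_contra hc
      apply hA
      apply mul_left_cancel₀ hc
      linear_combination (A 0 1 * A 1 0 - A 0 0 * A 1 1) * e02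
        + (A 0 0 * A 1 2 - A 0 2 * A 1 0) * e01
        + (A 0 2 * A 1 1 - A 0 1 * A 1 2) * e00
    have hb20 : A' 2 0 = 0 := by
      by_contra hc
      apply hA
      apply mul_left_cancel₀ hc
      linear_combination (A 0 1 * A 2 0 - A 0 0 * A 2 1) * e02
        + (A 0 0 * A 2 2 - A 0 2 * A 2 0) * e01
        + (A 0 2 * A 2 1 - A 0 1 * A 2 2) * e00
    refine ⟨ha10, ha20, hb10, hb20, ?_⟩
    have hDne : A 1 1 * A 2 2 - A 1 2 * A 2 1 ≠ 0 := by
      intro h0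
      apply hA
      rw [ha10, ha20]
      linear_combination A 0 0 * h0
    refine ⟨(A 1 1 * A 2 2 - A 1 2 * A 2 1)⁻¹, ?_, ?_⟩
    · ext i j
      fin_cases i <;> fin_cases j <;>
        simp [Matrix.smul_apply] <;>
        rw [eq_comm, inv_mul_eq_iff_eq_mul₀ hDne] <;>
        [ linear_combination A 1 1 * e12 - A 1 2 * e11;
          linear_combination A 1 1 * e22 - A 1 2 * e21;
          linear_combination A 2 1 * e12 - A 2 2 * e11;
          linear_combination A 2 1 * e22 - A 2 2 * e21 ]
    · rw [Matrix.det_fin_two_of]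
      field_simp
  · rintro ⟨ha10, ha20, hb10, hb20, l, hB, hl⟩
    rw [Matrix.det_fin_two_of] at hl
    have b11 : A' 1 1 = l * A 1 1 := by simpa using congrFun (congrFun hB 0) 0
    have b12 : A' 1 2 = l * A 1 2 := by simpa using congrFun (congrFun hB 0) 1
    have b21 : A' 2 1 = l * A 2 1 := by simpa using congrFun (congrFun hB 1) 0
    have b22 : A' 2 2 = l * A 2 2 := by simpa using congrFun (congrFun hB 1) 1
    funext i j
    fin_cases i <;> fin_cases j <;>
      simp [eCross, Matrix.mul_apply, Fin.sum_univ_three, Matrix.transpose_apply,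
        Matrix.vecHead, Matrix.vecTail,
        ha10, ha20, hb10, hb20, b11, b12, b21, b22] <;>
      linarith [hl]
end

section
/- Let e = (1,0,0)ᵀ and [e]_× the 3×3 skew-symmetric matrix of e. If A and A' are nonsingular real 3×3 matrices with A'ᵀ [e]_× A = [e]_×, then the determinants of their lower-right 2×2 blocks B = [[a_{22}, a_{23}],[a_{32}, a_{33}]] and B' = [[a'_{22}, a'_{23}],[a'_{32}, a'_{33}]] satisfy det(B)·det(B') = 1. -/
open Matrix

/-- Determinant consequence of Theorem 1: if nonsingular `A, A'` satisfy
`A'ᵀ [e]ₓ A = [e]ₓ`, then the determinants of their lower-right 2×2 blocks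
multiply to 1. -/
theorem theorem1_det_consequence (A A' : Matrix (Fin 3) (Fin 3) ℝ)
    (hA : A.det ≠ 0) (hA' : A'.det ≠ 0)
    (h : A'ᵀ * eCross * A = eCross) :
    (!![A 1 1, A 1 2; A 2 1, A 2 2] : Matrix (Fin 2) (Fin 2) ℝ).det *
      (!![A' 1 1, A' 1 2; A' 2 1, A' 2 2] : Matrix (Fin 2) (Fin 2) ℝ).det = 1 := by
  have h11 := congrFun (congrFun h 1) 1
  have h12 := congrFun (congrFun h 1) 2
  have h21 := congrFun (congrFun h 2) 1
  have h22 := congrFun (congrFun h 2) 2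
  simp [eCross, mul_apply, transpose_apply, Fin.sum_univ_succ] at h11 h12 h21 h22
  simp [det_fin_two]
  nlinarith [h11, h12, h21, h22, sq_nonneg (A 1 1), mul_self_nonneg (A 2 2)]
end

section
/- Let a_{22}, a_{23}, a_{32}, a_{33}, a'_{22}, a'_{23}, a'_{32}, a'_{33} be real numbers satisfying the four equations a_{22}a'_{32} − a_{32}a'_{22} = 0, a_{23}a'_{33} − a_{33}a'_{23} = 0, a_{22}a'_{33} − a_{32}a'_{23} = 1, and a_{23}a'_{32} − a_{33}a'_{22} = −1, and suppose the 2×2 matrices B = [[a_{22}, a_{23}],[a_{32}, a_{33}]] and B' = [[a'_{22}, a'_{23}],[a'_{32}, a'_{33}]] are nonsingular. Then there exists λ ≠ 0 such that B = λ·B'. -/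
/-!
Read the columns of `B` and `B'` as vectors of `ℝ²` paired by the area form `ω(u, v) = uᵀ J v`,
`J = !![0, 1; -1, 0]`. The four equations say exactly `Bᵀ J B' = J`. Every `2 × 2` matrix `M`
satisfies `Mᵀ J M = det M • J`, so `Bᵀ (J B') = (det B')⁻¹ • B'ᵀ (J B')`, and cancelling the
invertible matrix `J B'` gives `B = (det B')⁻¹ • B'`.
-/

open Matrix

def symplecticTwo (R : Type*) [CommRing R] : Matrix (Fin 2) (Fin 2) R := !![0, 1; -1, 0]

theorem det_symplecticTwo (R : Type*) [CommRing R] : (symplecticTwo R).det = 1 := by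
  simp [symplecticTwo, det_fin_two_of]

theorem transpose_mul_symplecticTwo_mul_self {R : Type*} [CommRing R]
    (M : Matrix (Fin 2) (Fin 2) R) : Mᵀ * symplecticTwo R * M = M.det • symplecticTwo R := by
  ext i j
  fin_cases i <;> fin_cases j <;>
    simp only [symplecticTwo, det_fin_two, Matrix.smul_apply, smul_eq_mul, mul_apply, Fin.sum_univ_two,
      transpose_apply, of_apply, cons_val', cons_val_zero, cons_val_one, cons_val_fin_one,
      Fin.zero_eta, Fin.mk_one, Fin.isValue] <;> ring

theorem eq_inv_det_smul_of_transpose_mul_symplecticTwo_mul_eq {K : Type*} [Field K]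
    {B B' : Matrix (Fin 2) (Fin 2) K} (h : Bᵀ * symplecticTwo K * B' = symplecticTwo K)
    (hB' : B'.det ≠ 0) : B = B'.det⁻¹ • B' := by
  have hJB' : IsUnit (symplecticTwo K * B').det := by
    simpa [det_mul, det_symplecticTwo] using hB'
  have hcancel : Bᵀ * (symplecticTwo K * B') = (B'.det⁻¹ • B'ᵀ) * (symplecticTwo K * B') := by
    rw [← Matrix.mul_assoc, h, smul_mul_assoc, ← Matrix.mul_assoc,
      transpose_mul_symplecticTwo_mul_self, smul_smul, inv_mul_cancel₀ hB', one_smul]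
  have htranspose : Bᵀ = (B'.det⁻¹ • B')ᵀ := by
    rw [transpose_smul, ← mul_nonsing_inv_cancel_right _ Bᵀ hJB', hcancel,
      mul_nonsing_inv_cancel_right _ _ hJB']
  exact transpose_injective htranspose

theorem eq6_implies_proportionality_general
    (a22 a23 a32 a33 a22' a23' a32' a33' : ℝ)
    (h1 : a22 * a32' - a32 * a22' = 0)
    (h2 : a23 * a33' - a33 * a23' = 0)
    (h3 : a22 * a33' - a32 * a23' = 1)
    (h4 : a23 * a32' - a33 * a22' = -1)
    (hB' : (!![a22', a23'; a32', a33'] : Matrix (Fin 2) (Fin 2) ℝ).det ≠ 0) :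
    ∃ l : ℝ, l ≠ 0 ∧
      (!![a22, a23; a32, a33] : Matrix (Fin 2) (Fin 2) ℝ) =
        l • !![a22', a23'; a32', a33'] := by
  have hform : (!![a22, a23; a32, a33] : Matrix (Fin 2) (Fin 2) ℝ)ᵀ * symplecticTwo ℝ *
      !![a22', a23'; a32', a33'] = symplecticTwo ℝ := by
    ext i j
    fin_cases i <;> fin_cases j <;>
      simp only [symplecticTwo, mul_apply, Fin.sum_univ_two, transpose_apply, of_apply, cons_val',
        cons_val_zero, cons_val_one, cons_val_fin_one, Fin.zero_eta, Fin.mk_one, Fin.isValue] <;>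
      linarith
  exact ⟨_, inv_ne_zero hB', eq_inv_det_smul_of_transpose_mul_symplecticTwo_mul_eq hform hB'⟩

/-- Key intermediate step in the proof of Theorem 1 (Equation (6) implies
block proportionality): the four scalar equations together with
nonsingularity of the two 2×2 blocks force `B = λ·B'` for some `λ ≠ 0`. -/
theorem eq6_implies_proportionality
    (a22 a23 a32 a33 a22' a23' a32' a33' : ℝ)
    (h1 : a22 * a32' - a32 * a22' = 0)
    (h2 : a23 * a33' - a33 * a23' = 0)
    (h3 : a22 * a33' - a32 * a23' = 1)
    (h4 : a23 * a32' - a33 * a22' = -1)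
    (hB : (!![a22, a23; a32, a33] : Matrix (Fin 2) (Fin 2) ℝ).det ≠ 0)
    (hB' : (!![a22', a23'; a32', a33'] : Matrix (Fin 2) (Fin 2) ℝ).det ≠ 0) :
    ∃ l : ℝ, l ≠ 0 ∧
      (!![a22, a23; a32, a33] : Matrix (Fin 2) (Fin 2) ℝ) =
        l • !![a22', a23'; a32', a33'] :=
  eq6_implies_proportionality_general a22 a23 a32 a33 a22' a23' a32' a33' h1 h2 h3 h4 hB'
end

section
/- Let b > 0 (the stereo baseline) and let P = (X₁, Y, Z) ∈ ℝ³ with Z > 0 be a 3D point in the left rectified camera coordinates, so its coordinates in the right rectified camera are (X₂, Y, Z) with X₂ = X₁ − b. Define r = √(Y² + Z²), β = arctan(Y/Z), γ₁ = arctan(X₁/r), γ₂ = arctan(X₂/r). Then tan γ₁ − tan γ₂ = b/r ≠ 0, and the point is recovered by the formulas X₁ = b·tan γ₁/(tan γ₁ − tan γ₂), X₂ = b·tan γ₂/(tan γ₁ − tan γ₂), Y = b·tan β/((tan γ₁ − tan γ₂)·√(1 + tan²β)), and Z = b/((tan γ₁ − tan γ₂)·√(1 + tan²β)). -/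
open Real

/-- With `r = √(Y² + Z²)`, this is `1 / cos β = r / Z` for `β = arctan (Y / Z)`. -/
lemma sqrt_one_add_div_sq {Y Z : ℝ} (hZ : 0 < Z) :
    √(1 + (Y / Z) ^ 2) = √(Y ^ 2 + Z ^ 2) / Z := by
  rw [eq_div_iff hZ.ne', ← sqrt_sq hZ.le, ← sqrt_mul (by positivity), sqrt_sq hZ.le]
  congr 1
  field_simp
  ring

lemma mul_div_div_div_cancel {K : Type*} [Field K] (x : K) {b r : K} (hb : b ≠ 0) (hr : r ≠ 0) :
    b * (x / r) / (b / r) = x := by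
  field_simp

/-- The 3D reconstruction formula (Equation (23)) of the paper: in the
canonical rectified stereo configuration with baseline `b > 0`, a point
`(X₁, Y, Z)` with `Z > 0` (and `X₂ = X₁ - b` in the right camera) is
recovered from the angles `β = arctan(Y/Z)`, `γᵢ = arctan(Xᵢ/r)`,
`r = √(Y² + Z²)`. -/
theorem reconstruction_formula (b X₁ X₂ Y Z r β γ₁ γ₂ : ℝ)
    (hb : b > 0) (hZ : Z > 0) (hX₂ : X₂ = X₁ - b)
    (hr : r = Real.sqrt (Y ^ 2 + Z ^ 2))
    (hβ : β = Real.arctan (Y / Z))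
    (hγ₁ : γ₁ = Real.arctan (X₁ / r))
    (hγ₂ : γ₂ = Real.arctan (X₂ / r)) :
    Real.tan γ₁ - Real.tan γ₂ = b / r ∧ b / r ≠ 0 ∧
    X₁ = b * Real.tan γ₁ / (Real.tan γ₁ - Real.tan γ₂) ∧
    X₂ = b * Real.tan γ₂ / (Real.tan γ₁ - Real.tan γ₂) ∧
    Y = b * Real.tan β /
      ((Real.tan γ₁ - Real.tan γ₂) * Real.sqrt (1 + Real.tan β ^ 2)) ∧
    Z = b /
      ((Real.tan γ₁ - Real.tan γ₂) * Real.sqrt (1 + Real.tan β ^ 2)) := by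
  have hr_pos : 0 < r := hr ▸ sqrt_pos.2 (by positivity)
  have htan₁ : tan γ₁ = X₁ / r := by rw [hγ₁, tan_arctan]
  have htan₂ : tan γ₂ = X₂ / r := by rw [hγ₂, tan_arctan]
  have htanβ : tan β = Y / Z := by rw [hβ, tan_arctan]
  have hdisparity : tan γ₁ - tan γ₂ = b / r := by
    rw [htan₁, htan₂, hX₂, ← sub_div, sub_sub_cancel]
  have hdenom : (tan γ₁ - tan γ₂) * √(1 + tan β ^ 2) = b / Z := by
    rw [hdisparity, htanβ, sqrt_one_add_div_sq hZ, ← hr, div_mul_div_cancel₀ hr_pos.ne']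
  refine ⟨hdisparity, div_ne_zero hb.ne' hr_pos.ne', ?_, ?_, ?_, ?_⟩
  · rw [hdisparity, htan₁, mul_div_div_div_cancel X₁ hb.ne' hr_pos.ne']
  · rw [hdisparity, htan₂, mul_div_div_div_cancel X₂ hb.ne' hr_pos.ne']
  · rw [hdenom, htanβ, mul_div_div_div_cancel Y hb.ne' hZ.ne']
  · rw [hdenom, div_div_cancel₀ hb.ne']
end
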